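/- arXiv:2401.03876 — 4 statements merged into one kernel-verified Lean document; each statement's English description precedes it below -/
import Mathlib

section
/- If strictly positive real numbers (U^k, λ^k) for k = 1,…,K satisfy the Afriat inequalities U^k ≤ U^l + λ^l ⟨p^l, q^k - q^l⟩ for all pairs (k,l), then the function u(x) = min_l {U^l + λ^l ⟨p^l, x - q^l⟩} satisfies u(q^k) = U^k for every k. -/
/-- If strictly positive (U^k, λ^k) satisfy the Afriat inequalities, then
u(x) = min_l {U^l + λ^l ⟨p^l, x - q^l⟩} satisfies u(q^k) = U^k for all k. -/
theorem stmt3 (S : ℕ) (K : Type*) [Fintype K] [Nonempty K]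
    (U lam : K → ℝ) (p q : K → Fin S → ℝ)
    (hU : ∀ k, 0 < U k) (hlam : ∀ k, 0 < lam k) (hp : ∀ k s, 0 < p k s)
    (hafriat : ∀ k l, U k ≤ U l + lam l * ∑ s, p l s * (q k s - q l s)) :
    ∀ k : K, Finset.univ.inf' Finset.univ_nonempty
      (fun l : K => U l + lam l * ∑ s, p l s * (q k s - q l s)) = U k := by
  intro k
  apply le_antisymm
  · exact Finset.inf'_le_of_le _ (Finset.mem_univ k) (by simp)
  · apply Finset.le_inf'
    intro l _
    exact hafriat k l
end

section
/- If strictly positive numbers (U^k, λ^k) satisfy the Afriat inequalities for data {(p^k, q^k)}, then the utility u(x) = min_l {U^l + λ^l ⟨p^l, x - q^l⟩} weakly rationalizes the data: for every observation k and every y with ⟨p^k, y⟩ ≤ ⟨p^k, q^k⟩, one has u(q^k) ≥ u(y). -/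
/-- If strictly positive (U^k, λ^k) satisfy the Afriat inequalities, then
u(x) = min_l {U^l + λ^l ⟨p^l, x - q^l⟩} weakly rationalizes the data:
⟨p^k, y⟩ ≤ ⟨p^k, q^k⟩ implies u(y) ≤ u(q^k). -/
theorem stmt4 (S : ℕ) (K : Type*) [Fintype K] [Nonempty K]
    (U lam : K → ℝ) (p q : K → Fin S → ℝ)
    (hU : ∀ k, 0 < U k) (hlam : ∀ k, 0 < lam k) (hp : ∀ k s, 0 < p k s)
    (hafriat : ∀ k l, U k ≤ U l + lam l * ∑ s, p l s * (q k s - q l s)) :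
    ∀ (k : K) (y : Fin S → ℝ), (∑ s, p k s * y s) ≤ (∑ s, p k s * q k s) →
      Finset.univ.inf' Finset.univ_nonempty
        (fun l : K => U l + lam l * ∑ s, p l s * (y s - q l s)) ≤
      Finset.univ.inf' Finset.univ_nonempty
        (fun l : K => U l + lam l * ∑ s, p l s * (q k s - q l s)) := by
  intro k y hy
  apply Finset.le_inf'
  intro l _
  have h1 : Finset.univ.inf' Finset.univ_nonempty
      (fun l : K => U l + lam l * ∑ s, p l s * (y s - q l s)) ≤
      U k + lam k * ∑ s, p k s * (y s - q k s) :=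
    Finset.inf'_le _ (Finset.mem_univ k)
  have h2 : ∑ s, p k s * (y s - q k s) ≤ 0 := by
    have : ∑ s, p k s * (y s - q k s) = (∑ s, p k s * y s) - ∑ s, p k s * q k s := by
      rw [← Finset.sum_sub_distrib]; congr 1; ext s; ring
    rw [this]; linarith
  have h3 : U k + lam k * ∑ s, p k s * (y s - q k s) ≤ U k := by
    nlinarith [hlam k]
  exact h1.trans (h3.trans (hafriat k l))
end

section
/- If the revealed preference relations on a finite dataset satisfy GARP, then there exist strictly positive real numbers U^k and λ^k for each observation k such that U^k ≤ U^l + λ^l ⟨p^l, q^k_{o^l} - q^l_{o^l}⟩ for every pair of observations (k,l). -/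
/-!
Rank each observation by the number of observations that reach it along revealed preference.
If `l` is directly revealed preferred to `k`, everything reaching `l` reaches `k`, so
`rank l ≤ rank k`; if the preference is strict, GARP says that `k` does not reach `l`, so
`rank l < rank k`. Take `λ^l = c ^ rank l` and `U^k = C - ε c ^ rank k`, where `ε` lies below every
positive entry of the matrix `A k l = ⟨p^l, q^k - q^l⟩` and `c` is so large that `ε (c - 1)`
dominates every negative entry: then each Afriat inequality holds, by the sign of `A k l`.
-/

open Finset Filter Topology Relation

lemma exists_pos_le_of_pos {ι : Type*} [Finite ι] (f : ι → ℝ) :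
    ∃ ε > 0, ∀ i, 0 < f i → ε ≤ f i := by
  have h : ∀ᶠ ε in 𝓝[>] (0 : ℝ), ∀ i, 0 < f i → ε ≤ f i := by
    refine eventually_all.2 fun i => ?_
    by_cases hi : 0 < f i
    · filter_upwards [nhdsWithin_le_nhds (eventually_le_nhds hi)] with ε hε using fun _ => hε
    · exact Eventually.of_forall fun _ h => absurd h hi
  exact (h.and self_mem_nhdsWithin).exists.imp fun ε h => ⟨h.2, h.1⟩

namespace Afriat

variable {K : Type*} (A : K → K → ℝ)

/-- With `A k l = ⟨p^l, q^k - q^l⟩`, observation `a` is directly revealed preferred to `b`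
exactly when `A b a ≤ 0`. -/
def SatisfiesGARP : Prop :=
  ∀ k l, TransGen (fun a b => A b a ≤ 0) k l → 0 ≤ A k l

variable {A}

lemma SatisfiesGARP.nonneg_of_reflTransGen (hA : SatisfiesGARP A) {k l : K}
    (hkl : ReflTransGen (fun a b => A b a ≤ 0) k l) : 0 ≤ A k l := by
  rcases reflTransGen_iff_eq_or_transGen.1 hkl with rfl | hkl
  · by_contra! hneg
    exact hneg.not_ge (hA l l (.single hneg.le))
  · exact hA k l hkl

lemma SatisfiesGARP.exists_rank [Fintype K] (hA : SatisfiesGARP A) :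
    ∃ μ : K → ℕ, (∀ k l, A k l ≤ 0 → μ l ≤ μ k) ∧ (∀ k l, A k l < 0 → μ l < μ k) := by
  classical
  let R := ReflTransGen (fun a b : K => A b a ≤ 0)
  have hsub : ∀ k l, A k l ≤ 0 → ({m | R m l} : Finset K) ⊆ ({m | R m k} : Finset K) := by
    intro k l hkl m
    simp only [mem_filter, mem_univ, true_and]
    exact fun hml => hml.tail hkl
  refine ⟨fun k => #{m | R m k}, fun k l hkl => card_le_card (hsub k l hkl),
    fun k l hkl => card_lt_card ((ssubset_iff_of_subset (hsub k l hkl.le)).2 ⟨k, ?_, ?_⟩)⟩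
  · simp [R, ReflTransGen.refl]
  · simpa using fun hkl' => hkl.not_ge (hA.nonneg_of_reflTransGen hkl')

theorem exists_afriat_of_rank [Fintype K] (μ : K → ℕ) (hle : ∀ k l, A k l ≤ 0 → μ l ≤ μ k)
    (hlt : ∀ k l, A k l < 0 → μ l < μ k) :
    ∃ U lam : K → ℝ, (∀ k, 0 < U k) ∧ (∀ k, 0 < lam k) ∧
      ∀ k l, U k ≤ U l + lam l * A k l := by
  obtain ⟨ε, hε, hεA⟩ := exists_pos_le_of_pos (Function.uncurry A)
  obtain ⟨M, hM⟩ := Finite.bddAbove_range fun x : K × K => -A x.1 x.2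
  set c : ℝ := 1 + max M 0 / ε
  have hc : 1 ≤ c := le_add_of_nonneg_right (by positivity)
  have hAc : ∀ k l, -(ε * (c - 1)) ≤ A k l := by
    intro k l
    have hεc : ε * (c - 1) = max M 0 := by rw [add_sub_cancel_left, mul_div_cancel₀ _ hε.ne']
    have := hM ⟨(k, l), rfl⟩
    rw [hεc]
    linarith [le_max_left M 0]
  have hscaled : ∀ k l, ε * (c ^ μ l - c ^ μ k) ≤ c ^ μ l * A k l := by
    intro k l
    rcases lt_trichotomy (A k l) 0 with hneg | hzero | hpos
    · have hpow : c ^ (μ l + 1) ≤ c ^ μ k := pow_le_pow_right₀ hc (hlt k l hneg)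
      calc ε * (c ^ μ l - c ^ μ k) ≤ ε * (c ^ μ l - c ^ (μ l + 1)) := by gcongr
        _ = c ^ μ l * -(ε * (c - 1)) := by ring
        _ ≤ c ^ μ l * A k l := by gcongr; exact hAc k l
    · have hpow : c ^ μ l ≤ c ^ μ k := pow_le_pow_right₀ hc (hle k l hzero.le)
      rw [hzero, mul_zero]
      exact mul_nonpos_of_nonneg_of_nonpos hε.le (sub_nonpos.2 hpow)
    · have hεkl : ε ≤ A k l := hεA (k, l) hpos
      calc ε * (c ^ μ l - c ^ μ k) ≤ ε * c ^ μ l := by gcongr; exact sub_le_self _ (by positivity)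
        _ ≤ c ^ μ l * A k l := by rw [mul_comm]; gcongr
  refine ⟨fun k => 1 + ε * c ^ univ.sup μ - ε * c ^ μ k, fun l => c ^ μ l,
    fun k => ?_, fun l => by positivity, fun k l => by linarith [hscaled k l]⟩
  have : ε * c ^ μ k ≤ ε * c ^ univ.sup μ := by
    gcongr
    exact le_sup (mem_univ k)
  linarith

end Afriat

theorem stmt6_general (S : ℕ) (K : Type*) [Fintype K]
    (o : K → Fin S → ℝ)
    (p : K → Fin S → ℝ)
    (q : K → Fin S → ℝ)
    -- GARP
    (hgarp : ∀ k l : K, Relation.TransGen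
        (fun a b : K =>
          (∑ s, p a s * |q b s - o a s|) ≤ (∑ s, p a s * |q a s - o a s|)) k l →
      ¬ ((∑ s, p l s * |q k s - o l s|) < (∑ s, p l s * |q l s - o l s|))) :
    ∃ U lam : K → ℝ, (∀ k, 0 < U k) ∧ (∀ k, 0 < lam k) ∧
      ∀ k l : K, U k ≤ U l + lam l *
        ∑ s, p l s * (|q k s - o l s| - |q l s - o l s|) := by
  set A : K → K → ℝ := fun k l => ∑ s, p l s * (|q k s - o l s| - |q l s - o l s|)
  have hA : ∀ k l, A k l =
      (∑ s, p l s * |q k s - o l s|) - ∑ s, p l s * |q l s - o l s| := fun k l => by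
    simp only [A, mul_sub, sum_sub_distrib]
  have hGARP : Afriat.SatisfiesGARP A := fun k l hkl => by
    simp only [hA, sub_nonpos] at hkl
    exact (hA k l).symm ▸ sub_nonneg.2 (not_lt.1 (hgarp k l hkl))
  obtain ⟨μ, hle, hlt⟩ := hGARP.exists_rank
  exact Afriat.exists_afriat_of_rank μ hle hlt

/-- Afriat direction: if the revealed preference relations of a finite PSM
dataset satisfy GARP, then there exist strictly positive numbers U^k, λ^k
with U^k ≤ U^l + λ^l ⟨p^l, q^k_{o^l} - q^l_{o^l}⟩ for all pairs (k,l). -/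
theorem stmt6 (S : ℕ) (K : Type*) [Fintype K]
    (N : Fin S → ℝ)
    (o : K → Fin S → ℝ) (ho : ∀ k s, o k s = 0 ∨ o k s = N s)
    (p : K → Fin S → ℝ) (hp : ∀ k s, 0 < p k s)
    (q : K → Fin S → ℝ) (hq : ∀ k s, q k s ∈ Set.Icc 0 (N s))
    -- GARP
    (hgarp : ∀ k l : K, Relation.TransGen
        (fun a b : K =>
          (∑ s, p a s * |q b s - o a s|) ≤ (∑ s, p a s * |q a s - o a s|)) k l →
      ¬ ((∑ s, p l s * |q k s - o l s|) < (∑ s, p l s * |q l s - o l s|))) :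
    ∃ U lam : K → ℝ, (∀ k, 0 < U k) ∧ (∀ k, 0 < lam k) ∧
      ∀ k l : K, U k ≤ U l + lam l *
        ∑ s, p l s * (|q k s - o l s| - |q l s - o l s|) :=
  stmt6_general S K o p q hgarp
end

section
/- Let (≽ᴿ, ≻ᴿ) be the revealed-preference order pair from a dataset satisfying GARP, and let ≥ denote the coordinatewise order (relative to the round-specific corner coordinates). Then the combined relation pair (≽ᴿ ∪ ≥, >) is acyclic, i.e., there is no cycle x¹ Q x² Q … Q x^L with x^L > x¹, where Q = ≽ᴿ ∪ ≥. -/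
/-- If the revealed preference order pair (≽ᴿ, ≻ᴿ) satisfies GARP (is acyclic),
then the combined order pair (≽ᴿ ∪ ≥, >) is acyclic: there is no cycle
x¹ Q x² Q … Q x^L with x^L > x¹, where Q = ≽ᴿ ∪ ≥. -/
theorem stmt7 (Z : Type*)
    (Rw Rs ge gt : Z → Z → Prop)
    -- order pair structure
    (hRsRw : ∀ x y, Rs x y → Rw x y)
    (hgtge : ∀ x y, gt x y → ge x y)
    (hge_refl : Reflexive ge) (hge_trans : Transitive ge)
    -- interaction of revealed preference with the coordinatewise orders
    (h1 : ∀ x y z, Rw x y → ge y z → Rw x z)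
    (h2 : ∀ x y z, Rw x y → gt y z → Rs x z)
    (h3 : ∀ x y z, Rs x y → ge y z → Rs x z)
    -- GARP: (≽ᴿ, ≻ᴿ) is acyclic
    (hgarp : ∀ (L : ℕ) (x : ℕ → Z), (∀ i < L, Rw (x i) (x (i+1))) →
      ¬ Rs (x L) (x 0))
    -- (≥, >) is an (acyclic) order pair
    (hord : ∀ (L : ℕ) (x : ℕ → Z), (∀ i < L, ge (x i) (x (i+1))) →
      ¬ gt (x L) (x 0)) :
    ∀ (L : ℕ) (x : ℕ → Z),
      (∀ i < L, Rw (x i) (x (i+1)) ∨ ge (x i) (x (i+1))) →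
      ¬ gt (x L) (x 0) := by
  intro L
  induction L using Nat.strong_induction_on with
  | _ L IH =>
    intro x hchain hgt
    by_cases hmerge : ∃ i, i + 1 < L ∧ ge (x (i+1)) (x (i+2))
    · -- merge steps i and i+1 into one
      obtain ⟨i, hi, hgei⟩ := hmerge
      set x' : ℕ → Z := fun j => if j ≤ i then x j else x (j+1) with hx'
      have hchain' : ∀ j < L - 1, Rw (x' j) (x' (j+1)) ∨ ge (x' j) (x' (j+1)) := by
        intro j hj
        rcases lt_trichotomy j i with hji | hji | hji
        · have e1 : x' j = x j := by simp only [hx']; rw [if_pos (by omega)]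
          have e2 : x' (j+1) = x (j+1) := by simp only [hx']; rw [if_pos (by omega)]
          rw [e1, e2]; exact hchain j (by omega)
        · subst hji
          have e1 : x' j = x j := by simp only [hx']; rw [if_pos (by omega)]
          have e2 : x' (j+1) = x (j+2) := by simp only [hx']; rw [if_neg (by omega)]
          rw [e1, e2]
          rcases hchain j (by omega) with h | h
          · exact Or.inl (h1 _ _ _ h hgei)
          · exact Or.inr (hge_trans h hgei)
        · have e1 : x' j = x (j+1) := by simp only [hx']; rw [if_neg (by omega)]
          have e2 : x' (j+1) = x (j+2) := by simp only [hx']; rw [if_neg (by omega)]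
          rw [e1, e2]; exact hchain (j+1) (by omega)
      have e0 : x' 0 = x 0 := by simp only [hx']; rw [if_pos (by omega)]
      have eL : x' (L-1) = x L := by
        simp only [hx']; rw [if_neg (by omega), Nat.sub_add_cancel (by omega : 1 ≤ L)]
      exact IH (L-1) (by omega) x' hchain' (by rw [eL, e0]; exact hgt)
    · -- no mergeable pair: all steps except possibly the first are Rw
      push_neg at hmerge
      have hRw : ∀ j, 1 ≤ j → j < L → Rw (x j) (x (j+1)) := by
        intro j h1j hjL
        rcases hchain j hjL with h | h
        · exact h
        · exfalso
          have := hmerge (j-1) (by omega)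
          have ej : j - 1 + 1 = j := by omega
          rw [ej] at this
          exact this (by rw [show j - 1 + 2 = j + 1 by omega]; exact h)
      rcases Nat.eq_zero_or_pos L with hL0 | hLpos
      · subst hL0
        exact hord 0 x (by intro i hi; omega) hgt
      · rcases hchain 0 hLpos with h0 | h0
        · -- all steps Rw
          have hRwlast : Rw (x (L-1)) (x L) := by
            rcases Nat.eq_or_lt_of_le hLpos with h | h
            · have : L - 1 = 0 := by omega
              rw [this, show L = 0 + 1 by omega]; exact h0
            · have := hRw (L-1) (by omega) (by omega)
              rwa [Nat.sub_add_cancel (by omega : 1 ≤ L)] at this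
          have hRs : Rs (x (L-1)) (x 0) := h2 _ _ _ hRwlast hgt
          refine hgarp (L-1) x ?_ hRs
          intro i hi
          rcases Nat.eq_zero_or_pos i with h | h
          · subst h; exact h0
          · exact hRw i h (by omega)
        · -- first step is ge, rest Rw
          rcases Nat.eq_or_lt_of_le hLpos with hL1 | hL2
          · -- L = 1
            refine hord 1 x ?_ (by rw [← hL1] at hgt; exact hgt)
            intro i hi
            have : i = 0 := by omega
            subst this; exact h0
          · -- L ≥ 2
            have hRwlast : Rw (x (L-1)) (x L) := by
              have := hRw (L-1) (by omega) (by omega)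
              rwa [Nat.sub_add_cancel (by omega : 1 ≤ L)] at this
            have hRs : Rs (x (L-1)) (x 1) :=
              h3 _ _ _ (h2 _ _ _ hRwlast hgt) h0
            refine hgarp (L-2) (fun j => x (j+1)) ?_ ?_
            · intro i hi
              exact hRw (i+1) (by omega) (by omega)
            · show Rs (x (L - 2 + 1)) (x (0 + 1))
              rw [show L - 2 + 1 = L - 1 by omega]
              exact hRs
end
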